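/- arXiv:2106.14041 — 3 statements merged into one kernel-verified Lean document; each statement's English description precedes it below -/
import Mathlib

section
/- With S, T, Z as above, define z^∨_n = [2]_q^n ∑_{k=0}^n q^{n-2k} z↓_k z↓_{n-k} for n ≥ 0 (so z^∨_0 = 1), and Z^∨(t) = ∑_{n≥0} z^∨_n t^n. Then Z^∨(t) = Z(S)·Z(T) as formal power series in t over F[z_1,z_2,...]. -/
/-!
Both `S` and `T` are rescalings `t ↦ c t` of `σ(t) = t / (1 + t² / [2]_q²)`, with `c = [2]_q / q`
and `c = [2]_q q` respectively. Expanding `σⁿ = tⁿ (1 + t² / [2]_q²)⁻ⁿ` by the negative binomial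
series shows that the coefficient of `tᵐ` in `Z(σ)` is exactly `z↓_m`. Hence `Z(S)` and `Z(T)` are
`∑ cᵐ z↓_m tᵐ` for the two values of `c`, and their product is `Z^∨` because
`([2]_q / q)ᵏ ([2]_q q)ⁿ⁻ᵏ = [2]_qⁿ q^{n-2k}`.
-/

noncomputable section

open PowerSeries

variable (F : Type*) [Field F]

/-- The generators `z_n` of `F[z_1, z_2, …]` (with the convention `z_0 = 1`),
realized inside the polynomial algebra on countably many variables indexed by `ℕ+`. -/
def z : ℕ → MvPolynomial ℕ+ F
  | 0 => 1
  | (n + 1) => MvPolynomial.X ⟨n + 1, Nat.succ_pos n⟩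

/-- The elements `z↓_n`:  `z↓_0 = 1` and for `n ≥ 1`,
`z↓_n = ∑_{ℓ=0}^{⌊(n-1)/2⌋} (-1)^ℓ C(n-1-ℓ,ℓ) [2]_q^{-2ℓ} z_{n-2ℓ}`. -/
def zdown (q : F) : ℕ → MvPolynomial ℕ+ F
  | 0 => 1
  | (n + 1) => ∑ ℓ ∈ Finset.range (n / 2 + 1),
      ((-1 : F) ^ ℓ * (Nat.choose (n - ℓ) ℓ : F) * ((q + q⁻¹)⁻¹) ^ (2 * ℓ)) •
        z F (n + 1 - 2 * ℓ)

/-- The elements `z^∨_n = [2]_q^n ∑_{k=0}^n q^{n-2k} z↓_k z↓_{n-k}`. -/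
def zvee (q : F) (n : ℕ) : MvPolynomial ℕ+ F :=
  ((q + q⁻¹) ^ n) • ∑ k ∈ Finset.range (n + 1),
    (q ^ ((n : ℤ) - 2 * (k : ℤ))) • (zdown F q k * zdown F q (n - k))

/-- The power series expansion of `(q+q⁻¹)·t·(q+q⁻¹t²)⁻¹`, i.e. of
`S = (q+q⁻¹)/(q⁻¹t+qt⁻¹)`. -/
def Sseries (q : F) : PowerSeries F :=
  PowerSeries.C (q + q⁻¹) * PowerSeries.X *
    (PowerSeries.C q + PowerSeries.C q⁻¹ * PowerSeries.X ^ 2)⁻¹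

/-- The power series expansion of `(q+q⁻¹)·t·(q⁻¹+qt²)⁻¹`, i.e. of
`T = (q+q⁻¹)/(qt+q⁻¹t⁻¹)`. -/
def Tseries (q : F) : PowerSeries F :=
  PowerSeries.C (q + q⁻¹) * PowerSeries.X *
    (PowerSeries.C q⁻¹ + PowerSeries.C q * PowerSeries.X ^ 2)⁻¹

open Finset

theorem rescale_C {R : Type*} [CommSemiring R] (a r : R) : rescale a (C r) = C r := by
  ext n
  rw [coeff_rescale, coeff_C]
  split_ifs with h <;> simp [h]

theorem sum_range_eq_sum_range_sub_two_mul {M : Type*} [AddCommMonoid M] (N : ℕ) (f : ℕ → M)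
    (hf : ∀ n ≤ N, ¬ 2 ∣ N - n → f n = 0) :
    ∑ n ∈ range (N + 1), f n = ∑ ℓ ∈ range (N / 2 + 1), f (N - 2 * ℓ) := by
  rw [← sum_image (s := range (N / 2 + 1)) (g := fun ℓ => N - 2 * ℓ) (by
    intro a ha b hb hab; simp only [coe_range, Set.mem_Iio] at ha hb hab; omega)]
  refine (sum_subset (fun n hn => ?_) fun n hn hn' => hf n ?_ fun ⟨ℓ, hℓ⟩ => hn' ?_).symm
  · simp only [mem_image, mem_range] at hn ⊢; omega
  · simp only [mem_range] at hn; omega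
  · simp only [mem_image, mem_range] at hn ⊢; exact ⟨ℓ, by omega, by omega⟩

section Field

variable {K : Type*} [Field K]

theorem pow_mul_zpow_sub_two_mul (b : K) {q : K} (hq : q ≠ 0) {k n : ℕ} (hk : k ≤ n) :
    b ^ n * q ^ ((n : ℤ) - 2 * k) = (b / q) ^ k * (b / q⁻¹) ^ (n - k) := by
  obtain ⟨j, rfl⟩ := Nat.exists_eq_add_of_le hk
  rw [show ((k + j : ℕ) : ℤ) - 2 * k = j - k by push_cast; ring, zpow_sub₀ hq, zpow_natCast,
    zpow_natCast, Nat.add_sub_cancel_left, div_inv_eq_mul, div_pow, mul_pow, pow_add]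
  field_simp

def xOverOnePlusSq (β : K) : K⟦X⟧ := X * (1 + C β * X ^ 2)⁻¹

theorem xOverOnePlusSq_pow_succ (β : K) (d : ℕ) :
    xOverOnePlusSq β ^ (d + 1) = X ^ (d + 1) *
      expand 2 two_ne_zero (rescale (-β) (mk fun j => (Nat.choose (d + j) j : K))) := by
  have inv_eq : (1 + C β * X ^ 2 : K⟦X⟧)⁻¹ = expand 2 two_ne_zero (rescale (-β) (mk 1)) := by
    rw [PowerSeries.inv_eq_iff_mul_eq_one (by simp)]
    simpa [rescale_X, expand_C] using
      congrArg (fun f => expand 2 two_ne_zero (rescale (-β) f)) (mk_one_mul_one_sub_eq_one K)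
  rw [xOverOnePlusSq, mul_pow, inv_eq, ← map_pow, ← map_pow, mk_one_pow_eq_mk_choose_add]
  congr 4 with j
  rw [Nat.choose_symm_add]

theorem coeff_xOverOnePlusSq_pow_succ (β : K) (d j : ℕ) :
    coeff (d + 1 + 2 * j) (xOverOnePlusSq β ^ (d + 1)) = (-β) ^ j * Nat.choose (d + j) j := by
  rw [xOverOnePlusSq_pow_succ, add_comm, coeff_X_pow_mul, coeff_expand_mul, coeff_rescale,
    coeff_mk]

theorem coeff_xOverOnePlusSq_pow_succ_of_not_dvd (β : K) {d m : ℕ} (h : ¬ 2 ∣ m - (d + 1)) :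
    coeff m (xOverOnePlusSq β ^ (d + 1)) = 0 := by
  rw [xOverOnePlusSq_pow_succ, coeff_X_pow_mul', if_pos (by omega),
    coeff_expand_of_not_dvd _ _ _ h]

theorem C_mul_X_mul_inv_eq_rescale_xOverOnePlusSq {b u v : K} (hb : b ≠ 0) (huv : u * v = 1) :
    C b * X * (C u + C v * X ^ 2)⁻¹ = rescale (b / u) (xOverOnePlusSq (b⁻¹ ^ 2)) := by
  have hu : u ≠ 0 := left_ne_zero_of_mul_eq_one huv
  have denom_eq : C u + C v * X ^ 2 = C u * rescale (b / u) (1 + C (b⁻¹ ^ 2) * X ^ 2) := by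
    rw [show v = u * (b⁻¹ ^ 2 * (b / u) ^ 2) by
      rw [← inv_eq_of_mul_eq_one_right huv]; field_simp]
    simp only [map_mul, map_pow, map_add, map_one, rescale_X, rescale_C]
    ring
  symm
  rw [eq_mul_inv_iff_mul_eq (by simp [hu]), denom_eq, xOverOnePlusSq, mul_left_comm, ← map_mul,
    mul_assoc, PowerSeries.inv_mul_cancel _ (by simp), mul_one, rescale_X, ← mul_assoc,
    ← map_mul, mul_div_cancel₀ _ hu]

end Field

/-- `Z(f) = ∑ₙ zₙ fⁿ`; the sum is truncated at `n = m` in degree `m`, which is exact when `f`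
has no constant term. -/
def zComp (f : F⟦X⟧) : (MvPolynomial ℕ+ F)⟦X⟧ :=
  mk fun m => ∑ n ∈ range (m + 1), z F n * coeff m (map (algebraMap F (MvPolynomial ℕ+ F)) f ^ n)

theorem coeff_zComp_rescale (f : F⟦X⟧) (c : F) (m : ℕ) :
    coeff m (zComp F (rescale c f)) = c ^ m • coeff m (zComp F f) := by
  simp only [zComp, coeff_mk, ← map_pow, coeff_map, coeff_rescale, map_mul, Algebra.smul_def,
    mul_sum]
  exact sum_congr rfl fun n _ => mul_left_comm _ _ _

theorem coeff_zComp_xOverOnePlusSq (q : F) (m : ℕ) :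
    coeff m (zComp F (xOverOnePlusSq ((q + q⁻¹)⁻¹ ^ 2))) = zdown F q m := by
  rcases m with _ | N
  · simp [zComp, z, zdown]
  rw [zComp, coeff_mk, sum_range_succ', pow_zero, coeff_one, if_neg N.succ_ne_zero, mul_zero,
    add_zero, sum_range_eq_sum_range_sub_two_mul, zdown]
  · refine sum_congr rfl fun ℓ hℓ => ?_
    obtain ⟨d, rfl⟩ : ∃ d, N = d + 2 * ℓ := ⟨N - 2 * ℓ, by simp only [mem_range] at hℓ; omega⟩
    rw [← map_pow, coeff_map, show d + 2 * ℓ + 1 = d + 1 + 2 * ℓ by ring, Nat.add_sub_cancel,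
      coeff_xOverOnePlusSq_pow_succ, show d + 2 * ℓ - ℓ = d + ℓ by omega,
      show d + 1 + 2 * ℓ - 2 * ℓ = d + 1 by omega, mul_comm, ← Algebra.smul_def, neg_pow, pow_mul]
    ring_nf
  · intro n hn hodd
    rw [← map_pow, coeff_map, coeff_xOverOnePlusSq_pow_succ_of_not_dvd _ (by omega), map_zero,
      mul_zero]

theorem zvee_eq_sum_smul_zdown_mul_smul_zdown (q : F) (hq : q ≠ 0) (n : ℕ) :
    zvee F q n = ∑ k ∈ range (n + 1),
      ((q + q⁻¹) / q) ^ k • zdown F q k * ((q + q⁻¹) / q⁻¹) ^ (n - k) • zdown F q (n - k) := by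
  rw [zvee, smul_sum]
  refine sum_congr rfl fun k hk => ?_
  rw [smul_mul_smul_comm, smul_smul,
    pow_mul_zpow_sub_two_mul _ hq (Nat.le_of_lt_succ (mem_range.mp hk))]

/-- `Z^∨(t) = Z(S)·Z(T)`, where `Z^∨(t) = ∑_n z^∨_n t^n` and `Z(S)`, `Z(T)` are the
composite power series `∑_n z_n S(t)^n`, `∑_n z_n T(t)^n`. -/
theorem Zvee_eq_ZS_mul_ZT (q : F) (hq0 : q ≠ 0) (h2 : q + q⁻¹ ≠ 0) :
    (PowerSeries.mk fun n => zvee F q n)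
      = (PowerSeries.mk fun m => ∑ n ∈ Finset.range (m + 1),
          z F n * PowerSeries.coeff m
            ((PowerSeries.map (algebraMap F (MvPolynomial ℕ+ F)) (Sseries F q)) ^ n)) *
        (PowerSeries.mk fun m => ∑ n ∈ Finset.range (m + 1),
          z F n * PowerSeries.coeff m
            ((PowerSeries.map (algebraMap F (MvPolynomial ℕ+ F)) (Tseries F q)) ^ n)) := by
  have hS : Sseries F q = rescale ((q + q⁻¹) / q) (xOverOnePlusSq ((q + q⁻¹)⁻¹ ^ 2)) :=
    C_mul_X_mul_inv_eq_rescale_xOverOnePlusSq h2 (mul_inv_cancel₀ hq0)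
  have hT : Tseries F q = rescale ((q + q⁻¹) / q⁻¹) (xOverOnePlusSq ((q + q⁻¹)⁻¹ ^ 2)) :=
    C_mul_X_mul_inv_eq_rescale_xOverOnePlusSq h2 (inv_mul_cancel₀ hq0)
  change _ = zComp F (Sseries F q) * zComp F (Tseries F q)
  ext n
  rw [coeff_mk, coeff_mul, Finset.Nat.sum_antidiagonal_eq_sum_range_succ_mk,
    zvee_eq_sum_smul_zdown_mul_smul_zdown F q hq0, hS, hT]
  simp only [coeff_zComp_rescale, coeff_zComp_xOverOnePlusSq]
end
end

section
/- The algebra homomorphism ∨ : F[z_1,z_2,...] → F[z_1,z_2,...] that sends z_n ↦ z^∨_n for n ≥ 1 is an algebra isomorphism. -/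
noncomputable section

open PowerSeries

variable (F : Type*) [Field F]

/-- The algebra homomorphism `∨` sending `z_n ↦ z^∨_n` for `n ≥ 1`. -/
def veeHom (q : F) : MvPolynomial ℕ+ F →ₐ[F] MvPolynomial ℕ+ F :=
  MvPolynomial.aeval fun i : ℕ+ => zvee F q (i : ℕ)

/-!
Order the generators by their index. Modulo polynomials in `z_1, …, z_{n-1}` one has
`z↓_n ≡ z_n`, and only the terms `k = 0` and `k = n` of `z^∨_n` involve `z_n`, so
`z^∨_n ≡ [2]_q^n (q^n + q^{-n}) z_n`; the coefficient is nonzero because `q` is not a root of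
unity. Such a triangular endomorphism maps every `F[z_1, …, z_n]` onto itself (by induction on
`n`), and a surjective endomorphism of the Noetherian ring `F[z_1, …, z_n]` is injective.
-/

theorem RingHom.injective_of_surjective_of_isNoetherianRing {A : Type*} [CommRing A]
    [IsNoetherianRing A] (f : A →+* A) (hf : Function.Surjective f) : Function.Injective f := by
  have ker_mono : Monotone fun k : ℕ => RingHom.ker (f ^ k) :=
    monotone_nat_of_le_succ fun k a ha => by
      rw [RingHom.mem_ker, pow_succ', RingHom.mul_def, RingHom.comp_apply, RingHom.mem_ker.mp ha,
        map_zero]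
  obtain ⟨N, hN⟩ := monotone_stabilizes_iff_noetherian.mpr inferInstance ⟨_, ker_mono⟩
  have ker_eq : RingHom.ker (f ^ (N + 1)) = RingHom.ker (f ^ N) := (hN (N + 1) N.le_succ).symm
  refine (injective_iff_map_eq_zero f).mpr fun a ha => ?_
  obtain ⟨b, rfl⟩ : ∃ b, (f ^ N) b = a := by
    rw [RingHom.coe_pow]; exact hf.iterate N a
  have hb : b ∈ RingHom.ker (f ^ (N + 1)) := by
    rw [RingHom.mem_ker, pow_succ', RingHom.mul_def, RingHom.comp_apply, ha]
  rwa [ker_eq] at hb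

namespace MvPolynomial

section Supported

variable {σ R : Type*} [CommSemiring R] {s : Set σ}

theorem X_mem_supported_of_mem {i : σ} (hi : i ∈ s) : X i ∈ supported R s :=
  Algebra.subset_adjoin ⟨i, hi, rfl⟩

theorem supported_le_iff {S : Subalgebra R (MvPolynomial σ R)} :
    supported R s ≤ S ↔ ∀ i ∈ s, X i ∈ S := by
  rw [supported_eq_adjoin_X, Algebra.adjoin_le_iff, Set.image_subset_iff]
  rfl

end Supported

section Triangular

variable {σ R : Type*} [PartialOrder σ] [CommRing R]

def IsTriangular (φ : MvPolynomial σ R →ₐ[R] MvPolynomial σ R) : Prop :=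
  ∀ i, ∃ c : R, IsUnit c ∧ φ (X i) - c • X i ∈ supported R (Set.Iio i)

namespace IsTriangular

variable {φ : MvPolynomial σ R →ₐ[R] MvPolynomial σ R} (hφ : IsTriangular φ)
include hφ

theorem map_supported_le {s : Set σ} (hs : IsLowerSet s) :
    (supported R s).map φ ≤ supported R s := by
  refine Subalgebra.map_le.mpr (supported_le_iff.mpr fun i hi => ?_)
  obtain ⟨c, -, hr⟩ := hφ i
  have hIio : supported R (Set.Iio i) ≤ supported R s :=
    supported_mono fun _ hj => hs (le_of_lt hj) hi
  simpa using add_mem (hIio hr) (Subalgebra.smul_mem _ (X_mem_supported_of_mem hi) c)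

theorem X_mem_map_supported_Iic [WellFoundedLT σ] (i : σ) :
    X i ∈ (supported R (Set.Iic i)).map φ := by
  induction i using WellFoundedLT.induction with
  | _ i ih =>
  obtain ⟨c, ⟨u, rfl⟩, hr⟩ := hφ i
  have hlower : supported R (Set.Iio i) ≤ (supported R (Set.Iic i)).map φ :=
    supported_le_iff.mpr fun j hj =>
      Subalgebra.map_mono (supported_mono (Set.Iic_subset_Iic.mpr (le_of_lt hj))) (ih j hj)
  have hφX : φ (X i) ∈ (supported R (Set.Iic i)).map φ :=
    Subalgebra.mem_map.mpr ⟨X i, X_mem_supported_of_mem le_rfl, rfl⟩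
  have hX : X i = (↑u⁻¹ : R) • (φ (X i) - (φ (X i) - (u : R) • X i)) := by
    rw [sub_sub_cancel, smul_smul, Units.inv_mul, one_smul]
  rw [hX]
  exact Subalgebra.smul_mem _ (sub_mem hφX (hlower hr)) _

theorem supported_le_map [WellFoundedLT σ] {s : Set σ} (hs : IsLowerSet s) :
    supported R s ≤ (supported R s).map φ :=
  supported_le_iff.mpr fun i hi => Subalgebra.map_mono (supported_mono fun _ hj => hs hj hi)
    (hφ.X_mem_map_supported_Iic i)

theorem surjective [WellFoundedLT σ] : Function.Surjective φ := fun p => by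
  obtain ⟨p', -, hp'⟩ := hφ.supported_le_map (lowerClosure (p.vars : Set σ)).lower
    (supported_mono subset_lowerClosure (mem_supported_vars p))
  exact ⟨p', hp'⟩

theorem injective [IsNoetherianRing R] [WellFoundedLT σ] [LocallyFiniteOrderBot σ] :
    Function.Injective φ := by
  intro p₁ p₂ h
  set s : Set σ := ↑(lowerClosure ((p₁.vars : Set σ) ∪ p₂.vars))
  have hs : IsLowerSet s := (lowerClosure _).lower
  have : Finite s := (p₁.vars.finite_toSet.union p₂.vars.finite_toSet).lowerClosure.to_subtype
  have : IsNoetherianRing (supported R s) :=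
    isNoetherianRing_of_ringEquiv _ (supportedEquivMvPolynomial s).symm.toRingEquiv
  let ψ : supported R s →ₐ[R] supported R s :=
    (φ.comp (supported R s).val).codRestrict _ fun p =>
      hφ.map_supported_le hs ⟨p, p.2, rfl⟩
  have hψ : Function.Surjective ψ := fun ⟨p, hp⟩ => by
    obtain ⟨p', hp', rfl⟩ := hφ.supported_le_map hs hp
    exact ⟨⟨p', hp'⟩, rfl⟩
  have hp₁ : p₁ ∈ supported R s :=
    supported_mono (subset_lowerClosure.trans' Set.subset_union_left) (mem_supported_vars p₁)
  have hp₂ : p₂ ∈ supported R s :=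
    supported_mono (subset_lowerClosure.trans' Set.subset_union_right) (mem_supported_vars p₂)
  exact congrArg Subtype.val <| RingHom.injective_of_surjective_of_isNoetherianRing
    ψ.toRingHom hψ (a₁ := ⟨p₁, hp₁⟩) (a₂ := ⟨p₂, hp₂⟩) (Subtype.ext h)

theorem bijective [IsNoetherianRing R] [WellFoundedLT σ] [LocallyFiniteOrderBot σ] :
    Function.Bijective φ :=
  ⟨hφ.injective, hφ.surjective⟩

end IsTriangular

end Triangular

end MvPolynomial

open MvPolynomial

theorem add_inv_ne_zero_of_pow_four_ne_one {K : Type*} [Field K] {x : K} (hx : x ≠ 0)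
    (h4 : x ^ 4 ≠ 1) : x + x⁻¹ ≠ 0 := by
  intro h
  have hsq : x ^ 2 = -1 := by
    field_simp at h
    linear_combination h
  exact h4 (by linear_combination (x ^ 2 - 1) * hsq)

variable {F}

theorem z_mem_supported {k n : ℕ} (h : k < n) : z F k ∈ supported F {i : ℕ+ | (i : ℕ) < n} := by
  cases k with
  | zero => exact one_mem _
  | succ k => exact X_mem_supported_of_mem h

theorem zdown_mem_supported (q : F) {k n : ℕ} (h : k < n) :
    zdown F q k ∈ supported F {i : ℕ+ | (i : ℕ) < n} := by
  cases k with
  | zero => exact one_mem _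
  | succ k =>
    exact Subalgebra.sum_mem _ fun _ _ => Subalgebra.smul_mem _ (z_mem_supported (by omega)) _

theorem zdown_sub_z_mem_supported (q : F) (n : ℕ) :
    zdown F q n - z F n ∈ supported F {i : ℕ+ | (i : ℕ) < n} := by
  cases n with
  | zero => simp [zdown, z]
  | succ n =>
    rw [zdown, Finset.sum_range_succ']
    simp only [pow_zero, Nat.sub_zero, Nat.choose_zero_right, Nat.cast_one, mul_one,
      Nat.mul_zero, one_smul, add_sub_cancel_right]
    exact Subalgebra.sum_mem _ fun _ _ => Subalgebra.smul_mem _ (z_mem_supported (by omega)) _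

theorem zvee_sub_smul_z_mem_supported (q : F) (n : ℕ) :
    zvee F q (n + 1) - ((q + q⁻¹) ^ (n + 1) * (q ^ (n + 1) + (q ^ (n + 1))⁻¹)) • z F (n + 1) ∈
      supported F {i : ℕ+ | (i : ℕ) < n + 1} := by
  set S := supported F {i : ℕ+ | (i : ℕ) < n + 1}
  set M := ∑ k ∈ Finset.range n, (q ^ (((n + 1 : ℕ) : ℤ) - 2 * ((k + 1 : ℕ) : ℤ))) •
    (zdown F q (k + 1) * zdown F q (n + 1 - (k + 1)))
  have hM : M ∈ S := Subalgebra.sum_mem _ fun k hk => Subalgebra.smul_mem _ (mul_mem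
    (zdown_mem_supported q (by simp at hk; omega)) (zdown_mem_supported q (by omega))) _
  have hsplit : zvee F q (n + 1) = (q + q⁻¹) ^ (n + 1) •
      (M + (q ^ (n + 1) + (q ^ (n + 1))⁻¹) • zdown F q (n + 1)) := by
    have hfirst : q ^ (((n + 1 : ℕ) : ℤ) - 2 * ((0 : ℕ) : ℤ)) = q ^ (n + 1) := by
      rw [Nat.cast_zero, mul_zero, sub_zero, zpow_natCast]
    have hlast : q ^ (((n + 1 : ℕ) : ℤ) - 2 * ((n + 1 : ℕ) : ℤ)) = (q ^ (n + 1))⁻¹ := by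
      rw [← zpow_natCast, ← zpow_neg]; ring_nf
    have hzdown0 : zdown F q 0 = 1 := rfl
    rw [zvee, Finset.sum_range_succ, Finset.sum_range_succ', hfirst, hlast, Nat.sub_self,
      Nat.sub_zero, hzdown0, one_mul, mul_one, add_smul, add_assoc]
  rw [hsplit, mul_smul, ← smul_sub, add_sub_assoc, ← smul_sub]
  exact Subalgebra.smul_mem _
    (add_mem hM (Subalgebra.smul_mem _ (zdown_sub_z_mem_supported q _) _)) _

theorem veeHom_isTriangular {q : F} (hq0 : q ≠ 0) (hq : ∀ n : ℕ, 0 < n → q ^ n ≠ 1) :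
    IsTriangular (veeHom F q) := by
  have hq_add_inv : ∀ m : ℕ, 0 < m → q ^ m + (q ^ m)⁻¹ ≠ 0 := fun m hm =>
    add_inv_ne_zero_of_pow_four_ne_one (pow_ne_zero m hq0)
      (by rw [← pow_mul]; exact hq _ (by omega))
  intro i
  obtain ⟨n, rfl⟩ : ∃ n, i = n.succPNat := ⟨i.natPred, (PNat.succPNat_natPred i).symm⟩
  refine ⟨(q + q⁻¹) ^ (n + 1) * (q ^ (n + 1) + (q ^ (n + 1))⁻¹),
    (mul_ne_zero (pow_ne_zero _ (by simpa using hq_add_inv 1 one_pos))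
      (hq_add_inv _ n.succ_pos)).isUnit, ?_⟩
  have hIio : Set.Iio n.succPNat = {j : ℕ+ | (j : ℕ) < n + 1} :=
    Set.ext fun j => PNat.coe_lt_coe j _
  rw [veeHom, aeval_X, hIio]
  exact zvee_sub_smul_z_mem_supported q n

/-- The map `∨ : F[z_1,z_2,…] → F[z_1,z_2,…]`, `z_n ↦ z^∨_n`, is an algebra isomorphism. -/
theorem veeHom_bijective (q : F) (hq0 : q ≠ 0) (hq : ∀ n : ℕ, 0 < n → q ^ n ≠ 1) :
    Function.Bijective (veeHom F q) :=
  (veeHom_isTriangular hq0 hq).bijective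
end
end

section
/- In F[z_1,z_2,...] the following four sets coincide: (i) the kernel of the algebra homomorphism θ: F[z_1,z_2,...] → F sending z_n ↦ 0 for all n ≥ 1; (ii) the sum ∑_{n≥1} P_n of the positive-degree homogeneous components; (iii) the ideal generated by {z_n}_{n≥1}; (iv) the ideal generated by {z^∨_n}_{n≥1}. -/
noncomputable section

open PowerSeries

variable (F : Type*) [Field F]

/-- The evaluation homomorphism `θ : F[z_1,z_2,…] → F` sending `z_n ↦ 0` for all `n ≥ 1`. -/
def thetaHom : MvPolynomial ℕ+ F →ₐ[F] F :=
  MvPolynomial.aeval fun _ : ℕ+ => (0 : F)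

/-! The map `θ` is the constant coefficient, so (i)–(iii) all describe the polynomials without
constant term; for (ii) this uses that every variable has positive weight. For (iv), modulo the
ideal generated by `z_1, …, z_{n-1}` one has `z↓_n ≡ z_n` and, since only the terms `k = 0` and
`k = n` of the defining sum survive, `z^∨_n ≡ [2]_q^n (q^n + q^{-n}) z↓_n`. As `q` is not a root
of unity, `q + q⁻¹` and `q^n + q^{-n}` are nonzero, so induction on `n` puts every `z_n` in the
ideal generated by the `z^∨_m`. -/

namespace MvPolynomial

variable {σ R : Type*} [CommSemiring R]

theorem ker_constantCoeff : RingHom.ker (constantCoeff (σ := σ) (R := R)) = idealOfVars σ R := by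
  ext p
  rw [RingHom.mem_ker, MvPolynomial.constantCoeff_eq, ← pow_one (idealOfVars σ R),
    mem_pow_idealOfVars_iff']
  simp [Finsupp.degree_eq_zero_iff]

theorem iSup_weightedHomogeneousSubmodule_pos {w : σ → ℕ} (hw : ∀ i, w i ≠ 0) :
    ⨆ n : ℕ, ⨆ _ : 1 ≤ n, weightedHomogeneousSubmodule R w n
      = (idealOfVars σ R).restrictScalars R := by
  have : Finsupp.NonTorsionWeight ℕ w := Finsupp.nonTorsionWeight_of ℕ w hw
  apply le_antisymm
  · refine iSup₂_le fun n hn p hp => ?_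
    rw [Submodule.restrictScalars_mem, ← ker_constantCoeff, RingHom.mem_ker]
    refine (mem_weightedHomogeneousSubmodule _ _ _ _).mp hp |>.coeff_eq_zero 0 ?_
    rw [map_zero]
    omega
  · intro p hp
    rw [Submodule.restrictScalars_mem, ← ker_constantCoeff, RingHom.mem_ker] at hp
    rw [as_sum p]
    refine Submodule.sum_mem _ fun d hd => ?_
    have hd0 : d ≠ 0 := by
      rintro rfl
      exact mem_support_iff.mp hd hp
    have hweight : 1 ≤ Finsupp.weight w d :=
      Nat.one_le_iff_ne_zero.mpr ((Finsupp.weight_eq_zero_iff_eq_zero w).not.mpr hd0)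
    exact Submodule.mem_iSup_of_mem _ <| Submodule.mem_iSup_of_mem hweight <|
      isWeightedHomogeneous_monomial _ _ _ rfl

end MvPolynomial

open MvPolynomial

variable {F}

theorem thetaHom_toRingHom : (thetaHom F).toRingHom = MvPolynomial.constantCoeff :=
  RingHom.ext fun p => by simp [thetaHom]

theorem z_pnat (i : ℕ+) : z F i = X i := by
  obtain ⟨_ | n, hn⟩ := i
  · exact absurd hn (lt_irrefl 0)
  · rfl

theorem z_mem_idealOfVars {j : ℕ} (hj : 1 ≤ j) : z F j ∈ idealOfVars ℕ+ F := by
  lift j to ℕ+ using hj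
  rw [z_pnat]
  exact Ideal.subset_span ⟨j, rfl⟩

section

variable {q : F} {I : Ideal (MvPolynomial ℕ+ F)} {n : ℕ}

theorem zdown_mem (hn : 1 ≤ n) (hI : ∀ j, 1 ≤ j → j ≤ n → z F j ∈ I) : zdown F q n ∈ I := by
  obtain ⟨m, rfl⟩ := Nat.exists_eq_add_of_le' hn
  refine Ideal.sum_mem _ fun ℓ hℓ => ?_
  rw [Finset.mem_range] at hℓ
  exact I.smul_of_tower_mem _ (hI _ (by omega) (by omega))

theorem zdown_sub_z_mem (hI : ∀ j, 1 ≤ j → j < n → z F j ∈ I) : zdown F q n - z F n ∈ I := by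
  rcases n with _ | m
  · simp [zdown, z]
  rw [zdown, Finset.sum_range_succ']
  simp only [pow_zero, Nat.choose_zero_right, mul_zero, Nat.cast_one, mul_one, one_smul,
    Nat.sub_zero, add_sub_cancel_right]
  refine Ideal.sum_mem _ fun ℓ hℓ => ?_
  rw [Finset.mem_range] at hℓ
  exact I.smul_of_tower_mem _ (hI _ (by omega) (by omega))

theorem zvee_sub_smul_zdown_mem (hn : 1 ≤ n) (hI : ∀ j, 1 ≤ j → j < n → z F j ∈ I) :
    zvee F q n - ((q + q⁻¹) ^ n * (q ^ n + (q ^ n)⁻¹)) • zdown F q n ∈ I := by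
  obtain ⟨m, rfl⟩ := Nat.exists_eq_add_of_le' hn
  set S := ∑ k ∈ Finset.range m, (q ^ ((m + 1 : ℕ) - 2 * (k + 1 : ℕ) : ℤ)) •
      (zdown F q (k + 1) * zdown F q (m + 1 - (k + 1)))
  have hS : S ∈ I := by
    refine Ideal.sum_mem _ fun k hk => ?_
    rw [Finset.mem_range] at hk
    refine I.smul_of_tower_mem _ (I.mul_mem_right _ (zdown_mem (by omega) ?_))
    exact fun j hj1 hj2 => hI j hj1 (by omega)
  have hsplit : zvee F q (m + 1)
      = ((q + q⁻¹) ^ (m + 1) * (q ^ (m + 1) + (q ^ (m + 1))⁻¹)) • zdown F q (m + 1)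
        + (q + q⁻¹) ^ (m + 1) • S := by
    rw [zvee, Finset.sum_range_succ, Finset.sum_range_succ']
    simp only [S, zdown, Nat.sub_self, Nat.sub_zero, one_mul, mul_one, Nat.cast_zero, mul_zero,
      sub_zero, zpow_natCast]
    rw [show ((m + 1 : ℕ) : ℤ) - 2 * ((m + 1 : ℕ) : ℤ) = -((m + 1 : ℕ) : ℤ) by ring, zpow_neg,
      zpow_natCast]
    module
  rw [hsplit, add_sub_cancel_left]
  exact Submodule.smul_of_tower_mem I _ hS

theorem zvee_mem (hn : 1 ≤ n) (hI : ∀ j, 1 ≤ j → j ≤ n → z F j ∈ I) : zvee F q n ∈ I := by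
  have hzdown : zdown F q n ∈ I := zdown_mem hn hI
  exact (I.sub_mem_iff_left (I.smul_of_tower_mem _ hzdown)).mp
    (zvee_sub_smul_zdown_mem hn fun j hj1 hj2 => hI j hj1 hj2.le)

end

theorem add_inv_ne_zero_of_pow_four_ne_one_s12 {a : F} (ha : a ≠ 0) (h4 : a ^ 4 ≠ 1) :
    a + a⁻¹ ≠ 0 := by
  intro h
  have hsq : a ^ 2 = -1 := by
    field_simp at h
    linear_combination h
  exact h4 (by rw [show a ^ 4 = (a ^ 2) ^ 2 by ring, hsq]; norm_num)

theorem z_mem_span_zvee {q : F} (hq0 : q ≠ 0) (hq : ∀ n : ℕ, 0 < n → q ^ n ≠ 1) (n : ℕ)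
    (hn : 1 ≤ n) : z F n ∈ Ideal.span (Set.range fun i : ℕ+ => zvee F q i) := by
  induction n using Nat.strong_induction_on with
  | _ n ih =>
  set I := Ideal.span (Set.range fun i : ℕ+ => zvee F q i)
  have hlower : ∀ j, 1 ≤ j → j < n → z F j ∈ I := fun j hj1 hj2 => ih j hj2 hj1
  set c : F := (q + q⁻¹) ^ n * (q ^ n + (q ^ n)⁻¹)
  have hc : c ≠ 0 := by
    refine mul_ne_zero (pow_ne_zero _ (add_inv_ne_zero_of_pow_four_ne_one_s12 hq0 (hq 4 four_pos)))
      (add_inv_ne_zero_of_pow_four_ne_one_s12 (pow_ne_zero _ hq0) ?_)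
    rw [← pow_mul]
    exact hq _ (by omega)
  have hzvee : zvee F q n ∈ I := Ideal.subset_span ⟨⟨n, hn⟩, rfl⟩
  have hzdown : zdown F q n ∈ I := by
    have h : c • zdown F q n ∈ I :=
      (I.sub_mem_iff_right hzvee).mp (zvee_sub_smul_zdown_mem hn hlower)
    simpa only [inv_smul_smul₀ hc] using I.smul_of_tower_mem c⁻¹ h
  exact (I.sub_mem_iff_right hzdown).mp (zdown_sub_z_mem hlower)

theorem span_zvee_eq_idealOfVars {q : F} (hq0 : q ≠ 0) (hq : ∀ n : ℕ, 0 < n → q ^ n ≠ 1) :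
    Ideal.span (Set.range fun i : ℕ+ => zvee F q i) = idealOfVars ℕ+ F := by
  apply le_antisymm
  · rw [Ideal.span_le, Set.range_subset_iff]
    exact fun i => zvee_mem i.pos fun j hj _ => z_mem_idealOfVars hj
  · rw [Ideal.span_le, Set.range_subset_iff]
    intro i
    rw [← z_pnat]
    exact z_mem_span_zvee hq0 hq i i.pos

variable (F)

/-- In `F[z_1,z_2,…]` the following coincide: the kernel of `θ : z_n ↦ 0`; the sum
`∑_{n≥1} P_n` of the positive-degree homogeneous components; the ideal generated by
`{z_n}_{n≥1}`; and the ideal generated by `{z^∨_n}_{n≥1}`. -/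
theorem ker_theta_eq (q : F) (hq0 : q ≠ 0) (hq : ∀ n : ℕ, 0 < n → q ^ n ≠ 1) :
    ((RingHom.ker (thetaHom F).toRingHom : Ideal (MvPolynomial ℕ+ F)) :
        Set (MvPolynomial ℕ+ F))
      = ((⨆ n : ℕ, ⨆ _ : 1 ≤ n,
          MvPolynomial.weightedHomogeneousSubmodule F (fun i : ℕ+ => (i : ℕ)) n :
            Submodule F (MvPolynomial ℕ+ F)) : Set (MvPolynomial ℕ+ F)) ∧
    ((RingHom.ker (thetaHom F).toRingHom : Ideal (MvPolynomial ℕ+ F)) :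
        Set (MvPolynomial ℕ+ F))
      = ((Ideal.span (Set.range (MvPolynomial.X : ℕ+ → MvPolynomial ℕ+ F)) :
          Ideal (MvPolynomial ℕ+ F)) : Set (MvPolynomial ℕ+ F)) ∧
    ((RingHom.ker (thetaHom F).toRingHom : Ideal (MvPolynomial ℕ+ F)) :
        Set (MvPolynomial ℕ+ F))
      = ((Ideal.span (Set.range fun i : ℕ+ => zvee F q (i : ℕ)) :
          Ideal (MvPolynomial ℕ+ F)) : Set (MvPolynomial ℕ+ F)) := by
  rw [thetaHom_toRingHom, MvPolynomial.ker_constantCoeff, span_zvee_eq_idealOfVars hq0 hq,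
    MvPolynomial.iSup_weightedHomogeneousSubmodule_pos fun i => i.ne_zero]
  exact ⟨rfl, rfl, rfl⟩
end
end
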